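/- arXiv:1705.03784 — 9 statements merged into one kernel-verified Lean document; each statement's English description precedes it below -/
import Mathlib

section
/- Let m ≥ 1 and let C be a real m×m matrix such that ⟨C y, y⟩ ≤ 0 for every y ∈ ℝ^m and whose off-diagonal entries are nonnegative (C_{ij} ≥ 0 whenever i ≠ j). If λ ∈ ℂ is a complex eigenvalue of C with Re λ = 0, then λ = 0; that is, 0 is the only possible eigenvalue of C lying on the imaginary axis. -/
open Matrix

/-! Suppose `C z = λ z` with `z ≠ 0` and `λ = i b`, `b ≠ 0`. Since the off-diagonal entries
of `C` are nonnegative, the triangle inequality applied to `(λ - Cᵢᵢ) zᵢ = ∑_{j ≠ i} Cᵢⱼ zⱼ`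
gives `(Cᵢᵢ + |λ - Cᵢᵢ|) |zᵢ| ≤ (C |z|)ᵢ`, and `|λ - Cᵢᵢ| > |Cᵢᵢ|` because `b ≠ 0`. Hence the
real vector `|z|` satisfies `⟨C |z|, |z|⟩ > 0`, contradicting the nonpositivity of the
quadratic form. -/

theorem Matrix.exists_mulVec_eq_smul_of_mem_spectrum {n K : Type*} [Fintype n] [DecidableEq n]
    [Field K] {A : Matrix n n K} {μ : K} (h : μ ∈ spectrum K A) :
    ∃ v : n → K, v ≠ 0 ∧ A *ᵥ v = μ • v := by
  rw [← Matrix.spectrum_toLin', ← Module.End.hasEigenvalue_iff_mem_spectrum] at h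
  obtain ⟨v, hv⟩ := h.exists_hasEigenvector
  exact ⟨v, hv.2, by simpa using hv.apply_eq_smul⟩

theorem Complex.add_norm_sub_ofReal_pos {μ : ℂ} (hre : μ.re = 0) (hμ : μ ≠ 0) (a : ℝ) :
    0 < a + ‖μ - a‖ := by
  have him : (μ - a).im ≠ 0 := by
    simpa using fun h => hμ (Complex.ext hre h)
  have hlt : |(μ - a).re| < ‖μ - a‖ := Complex.abs_re_lt_norm.mpr him
  simp only [Complex.sub_re, hre, Complex.ofReal_re, zero_sub, abs_neg] at hlt
  linarith [neg_abs_le a]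

theorem Matrix.diag_add_norm_sub_mul_norm_le_mulVec_norm {n : Type*} [Fintype n]
    {C : Matrix n n ℝ} (hoff : ∀ i j, i ≠ j → 0 ≤ C i j) {μ : ℂ} {z : n → ℂ}
    (hz : C.map Complex.ofReal *ᵥ z = μ • z) (i : n) :
    (C i i + ‖μ - C i i‖) * ‖z i‖ ≤ (C *ᵥ fun j => ‖z j‖) i := by
  classical
  have hrow : (μ - C i i) * z i = ∑ j ∈ Finset.univ.erase i, (C i j : ℂ) * z j := by
    have h := congrFun hz i
    simp only [mulVec, dotProduct, map_apply, Pi.smul_apply, smul_eq_mul] at h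
    rw [← Finset.add_sum_erase _ _ (Finset.mem_univ i)] at h
    linear_combination -h
  have hnorm :
      ‖μ - C i i‖ * ‖z i‖ ≤ ∑ j ∈ Finset.univ.erase i, C i j * ‖z j‖ := by
    rw [← norm_mul, hrow]
    refine (norm_sum_le _ _).trans_eq (Finset.sum_congr rfl fun j hj => ?_)
    have hCij := hoff i j (Finset.ne_of_mem_erase hj).symm
    rw [norm_mul, Complex.norm_real, Real.norm_of_nonneg hCij]
  rw [mulVec, dotProduct, ← Finset.add_sum_erase _ _ (Finset.mem_univ i)]
  linarith

theorem eigenvalue_on_imaginary_axis_eq_zero_general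
    (m : ℕ) (C : Matrix (Fin m) (Fin m) ℝ)
    (hC : ∀ y : Fin m → ℝ, C.mulVec y ⬝ᵥ y ≤ 0)
    (hoff : ∀ i j : Fin m, i ≠ j → 0 ≤ C i j) :
    ∀ lam : ℂ, lam ∈ spectrum ℂ (C.map (Complex.ofReal)) → lam.re = 0 → lam = 0 := by
  intro lam hmem hre
  by_contra hlam
  obtain ⟨z, hz0, hz⟩ := exists_mulVec_eq_smul_of_mem_spectrum hmem
  set w : Fin m → ℝ := fun j => ‖z j‖
  obtain ⟨i₀, hi₀⟩ := Function.ne_iff.mp hz0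
  have hcoef (i : Fin m) : 0 < C i i + ‖lam - C i i‖ :=
    Complex.add_norm_sub_ofReal_pos hre hlam _
  have hpos : 0 < ∑ i, (C i i + ‖lam - C i i‖) * w i * w i :=
    Finset.sum_pos' (fun i _ => by have := hcoef i; positivity)
      ⟨i₀, Finset.mem_univ _, by
        have := hcoef i₀
        have : 0 < w i₀ := norm_pos_iff.mpr hi₀
        positivity⟩
  have hle : ∑ i, (C i i + ‖lam - C i i‖) * w i * w i ≤ C *ᵥ w ⬝ᵥ w :=
    Finset.sum_le_sum fun i _ => mul_le_mul_of_nonneg_right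
      (diag_add_norm_sub_mul_norm_le_mulVec_norm hoff hz i) (norm_nonneg _)
  linarith [hC w]

/-- If `C` is a real `m × m` matrix (`m ≥ 1`) with nonpositive quadratic form
(`⟨C y, y⟩ ≤ 0` for every `y ∈ ℝ^m`) and nonnegative off-diagonal entries,
then the only possible complex eigenvalue of `C` on the imaginary axis is `0`. -/
theorem eigenvalue_on_imaginary_axis_eq_zero
    (m : ℕ) (hm : 1 ≤ m) (C : Matrix (Fin m) (Fin m) ℝ)
    (hC : ∀ y : Fin m → ℝ, C.mulVec y ⬝ᵥ y ≤ 0)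
    (hoff : ∀ i j : Fin m, i ≠ j → 0 ≤ C i j) :
    ∀ lam : ℂ, lam ∈ spectrum ℂ (C.map (Complex.ofReal)) → lam.re = 0 → lam = 0 :=
  eigenvalue_on_imaginary_axis_eq_zero_general m C hC hoff
end

section
/- Let m ≥ 1 and let V be a linear subspace of ℝ^m with the property that every nonzero vector v ∈ V has either all components strictly positive or all components strictly negative. Then V has dimension at most one. -/
/-! A nonzero vector of `V` has no zero component, so evaluation at the first coordinate is
injective on `V`, embedding it into `ℝ`. -/

theorem Submodule.finrank_le_one_of_disjoint_ker {R M : Type*} [Ring R] [StrongRankCondition R]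
    [AddCommGroup M] [Module R M] (f : M →ₗ[R] R) {V : Submodule R M}
    (hV : Disjoint V (LinearMap.ker f)) : Module.finrank R V ≤ 1 := by
  simpa using LinearMap.finrank_le_finrank_of_injective (f.injective_domRestrict_iff.mpr hV)

/-- If every nonzero vector of a subspace `V ⊆ ℝ^m` (`m ≥ 1`) has either all components
strictly positive or all components strictly negative, then `dim V ≤ 1`. -/
theorem finrank_le_one_of_signed_components
    (m : ℕ) (hm : 1 ≤ m) (V : Submodule ℝ (Fin m → ℝ))
    (hV : ∀ v ∈ V, v ≠ 0 → (∀ i, 0 < v i) ∨ (∀ i, v i < 0)) :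
    Module.finrank ℝ V ≤ 1 := by
  let i₀ : Fin m := ⟨0, hm⟩
  refine V.finrank_le_one_of_disjoint_ker (LinearMap.proj i₀) (Submodule.disjoint_def.mpr ?_)
  intro v hvV hv_ker
  by_contra hv_ne
  rcases hV v hvV hv_ne with hpos | hneg
  · exact (hpos i₀).ne' hv_ker
  · exact (hneg i₀).ne hv_ker
end

section
/- Let m ≥ 1, let X be a nonempty set and, for each x ∈ X, let C(x) be a real m×m matrix whose off-diagonal entries are nonnegative (C(x)_{ij} ≥ 0 for all x ∈ X and all i ≠ j). Assume there is no subset K of {1, …, m} with ∅ ≠ K ≠ {1, …, m} such that C(x)_{ij} = 0 for every x ∈ X, every i ∈ K and every j ∉ K. Then every nonzero vector η ∈ ℝ^m with nonnegative components satisfying C(x) η = 0 for every x ∈ X has all components strictly positive. -/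
open Matrix

/-!
If `η_i = 0`, then `0 = (C x η)_i = ∑_{j ≠ i} C(x)_{ij} η_j` is a sum of nonnegative terms, so
`C(x)_{ij} = 0` whenever `η_j > 0`. Hence the zero set of `η` would be a set `K` excluded by
irreducibility, unless it is empty.
-/

namespace Matrix

variable {n R : Type*} [Fintype n] [Semiring R] [PartialOrder R] [IsOrderedRing R]
  [NoZeroDivisors R]

theorem apply_eq_zero_of_mulVec_eq_zero {A : Matrix n n R} {η : n → R}
    (hoff : ∀ i j, i ≠ j → 0 ≤ A i j) (hη : 0 ≤ η) (hA : A *ᵥ η = 0)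
    {i j : n} (hi : η i = 0) (hj : η j ≠ 0) : A i j = 0 := by
  have hterms : ∀ k ∈ Finset.univ, 0 ≤ A i k * η k := by
    intro k _
    by_cases hk : i = k
    · subst hk
      simp [hi]
    · exact mul_nonneg (hoff i k hk) (hη k)
  have hsum : ∑ k, A i k * η k = 0 := congrFun hA i
  have hij : A i j * η j = 0 :=
    (Finset.sum_eq_zero_iff_of_nonneg hterms).mp hsum j (Finset.mem_univ j)
  exact (mul_eq_zero.mp hij).resolve_right hj

end Matrix

theorem pos_components_of_nonneg_kernel_vector_general
    (m : ℕ) (X : Type*)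
    (C : X → Matrix (Fin m) (Fin m) ℝ)
    (hoff : ∀ x : X, ∀ i j : Fin m, i ≠ j → 0 ≤ C x i j)
    (hirr : ¬ ∃ K : Set (Fin m), K.Nonempty ∧ K ≠ Set.univ ∧
      ∀ x : X, ∀ i ∈ K, ∀ j ∉ K, C x i j = 0)
    (η : Fin m → ℝ) (hη : η ≠ 0) (hnonneg : ∀ i, 0 ≤ η i)
    (hker : ∀ x : X, (C x).mulVec η = 0) :
    ∀ i, 0 < η i := by
  by_contra! ⟨i₀, hi₀⟩
  refine hirr ⟨{i | η i = 0}, ⟨i₀, le_antisymm hi₀ (hnonneg i₀)⟩, ?_, ?_⟩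
  · intro huniv
    exact hη (funext fun j => (Set.eq_univ_iff_forall.mp huniv j : η j = 0))
  · intro x i hi j hj
    exact apply_eq_zero_of_mulVec_eq_zero (hoff x) hnonneg (hker x) hi hj

/-- Let `C x` (`x ∈ X`, `X` nonempty) be real `m × m` matrices (`m ≥ 1`) with nonnegative
off-diagonal entries, and assume there is no nontrivial set `K ⊆ {1,…,m}` such that
`C x i j = 0` for all `x`, all `i ∈ K` and all `j ∉ K`. Then every nonzero vector
`η ∈ ℝ^m` with nonnegative components satisfying `C x η = 0` for every `x` has all
components strictly positive. -/
theorem pos_components_of_nonneg_kernel_vector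
    (m : ℕ) (hm : 1 ≤ m) (X : Type*) [Nonempty X]
    (C : X → Matrix (Fin m) (Fin m) ℝ)
    (hoff : ∀ x : X, ∀ i j : Fin m, i ≠ j → 0 ≤ C x i j)
    (hirr : ¬ ∃ K : Set (Fin m), K.Nonempty ∧ K ≠ Set.univ ∧
      ∀ x : X, ∀ i ∈ K, ∀ j ∉ K, C x i j = 0)
    (η : Fin m → ℝ) (hη : η ≠ 0) (hnonneg : ∀ i, 0 ≤ η i)
    (hker : ∀ x : X, (C x).mulVec η = 0) :
    ∀ i, 0 < η i :=
  pos_components_of_nonneg_kernel_vector_general m X C hoff hirr η hη hnonneg hker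
end

section
/- Let m ≥ 1 and let C be a real m×m matrix whose diagonal entries are negative, whose off-diagonal entries are positive, and such that the sum of the entries of each row and the sum of the entries of each column are both zero (∑_j C_{ij} = 0 for every i and ∑_i C_{ij} = 0 for every j). Then ⟨C y, y⟩ ≤ 0 for every y ∈ ℝ^m. -/
/-!
Expanding the squares, `∑ i j, C i j (y i - y j)²` equals the row-sum and column-sum terms
minus `2 ⟨C y, y⟩`. With zero row and column sums only `-2 ⟨C y, y⟩` survives, while the
left side is nonnegative because every off-diagonal entry is positive and the diagonal
terms vanish.
-/

open Matrix

namespace Matrix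

variable {n R : Type*} [Fintype n]

theorem sum_sum_mul_sub_sq [CommRing R] (C : Matrix n n R) (y : n → R) :
    ∑ i, ∑ j, C i j * (y i - y j) ^ 2 =
      ∑ i, (∑ j, C i j) * y i ^ 2 + ∑ j, (∑ i, C i j) * y j ^ 2 - 2 * (C *ᵥ y ⬝ᵥ y) := by
  have hcross : C *ᵥ y ⬝ᵥ y = ∑ i, ∑ j, C i j * y j * y i := by
    simp only [dotProduct, mulVec, Finset.sum_mul]
  simp only [hcross, Finset.sum_mul, Finset.mul_sum]
  rw [Finset.sum_comm (f := fun j i => C i j * y j ^ 2), ← Finset.sum_add_distrib,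
    ← Finset.sum_sub_distrib]
  refine Finset.sum_congr rfl fun i _ => ?_
  rw [← Finset.sum_add_distrib, ← Finset.sum_sub_distrib]
  exact Finset.sum_congr rfl fun j _ => by ring

theorem sum_sum_mul_sub_sq_of_sums_eq_zero [CommRing R] {C : Matrix n n R}
    (hrow : ∀ i, ∑ j, C i j = 0) (hcol : ∀ j, ∑ i, C i j = 0) (y : n → R) :
    ∑ i, ∑ j, C i j * (y i - y j) ^ 2 = -2 * (C *ᵥ y ⬝ᵥ y) := by
  simp only [sum_sum_mul_sub_sq, hrow, hcol, zero_mul, Finset.sum_const_zero]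
  ring

theorem sum_sum_mul_sub_sq_nonneg [CommRing R] [LinearOrder R] [IsOrderedRing R]
    {C : Matrix n n R} (hoff : ∀ i j, i ≠ j → 0 ≤ C i j) (y : n → R) :
    0 ≤ ∑ i, ∑ j, C i j * (y i - y j) ^ 2 := by
  refine Finset.sum_nonneg fun i _ => Finset.sum_nonneg fun j _ => ?_
  rcases eq_or_ne i j with rfl | hij
  · simp
  · exact mul_nonneg (hoff i j hij) (sq_nonneg _)

theorem dotProduct_mulVec_self_nonpos_of_sums_eq_zero [CommRing R] [LinearOrder R]
    [IsStrictOrderedRing R] {C : Matrix n n R} (hoff : ∀ i j, i ≠ j → 0 ≤ C i j)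
    (hrow : ∀ i, ∑ j, C i j = 0) (hcol : ∀ j, ∑ i, C i j = 0) (y : n → R) :
    C *ᵥ y ⬝ᵥ y ≤ 0 := by
  have h := sum_sum_mul_sub_sq_nonneg hoff y
  rw [sum_sum_mul_sub_sq_of_sums_eq_zero hrow hcol] at h
  linarith

end Matrix

theorem quadratic_form_nonpos_of_zero_row_col_sums_general
    (m : ℕ) (C : Matrix (Fin m) (Fin m) ℝ)
    (hoff : ∀ i j : Fin m, i ≠ j → 0 < C i j)
    (hrow : ∀ i, ∑ j, C i j = 0) (hcol : ∀ j, ∑ i, C i j = 0) :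
    ∀ y : Fin m → ℝ, C.mulVec y ⬝ᵥ y ≤ 0 :=
  dotProduct_mulVec_self_nonpos_of_sums_eq_zero (fun i j hij => (hoff i j hij).le) hrow hcol

/-- If `C` is a real `m × m` matrix (`m ≥ 1`) with negative diagonal entries, positive
off-diagonal entries, and all row sums and column sums equal to zero, then the quadratic
form of `C` is nonpositive: `⟨C y, y⟩ ≤ 0` for every `y ∈ ℝ^m`. -/
theorem quadratic_form_nonpos_of_zero_row_col_sums
    (m : ℕ) (hm : 1 ≤ m) (C : Matrix (Fin m) (Fin m) ℝ)
    (hdiag : ∀ i, C i i < 0) (hoff : ∀ i j : Fin m, i ≠ j → 0 < C i j)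
    (hrow : ∀ i, ∑ j, C i j = 0) (hcol : ∀ j, ∑ i, C i j = 0) :
    ∀ y : Fin m → ℝ, C.mulVec y ⬝ᵥ y ≤ 0 :=
  quadratic_form_nonpos_of_zero_row_col_sums_general m C hoff hrow hcol
end

section
/- Let d ≥ 1, let Q⁰ be a constant symmetric positive definite d×d real matrix, let γ ≥ 0, b₀ > 0 and β > max(γ − 1, 0). Define Q(x) = (1+|x|²)^γ Q⁰, b(x) = −b₀ x (1+|x|²)^β and φ(x) = 1+|x|² for x ∈ ℝ^d. Then for every x ∈ ℝ^d one has Tr(Q(x) D²φ(x)) + ⟨b(x), ∇φ(x)⟩ = 2 φ(x) [(1+|x|²)^{γ−1} Tr Q⁰ − b₀ |x|² (1+|x|²)^{β−1}], and there exist constants a > 0 and c > 0 such that Tr(Q(x) D²φ(x)) + ⟨b(x), ∇φ(x)⟩ ≤ a − c φ(x) for every x ∈ ℝ^d. -/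
open Matrix
open scoped RealInnerProductSpace

/-- The Lyapunov function `φ(x) = 1 + |x|²` on `ℝ^d`. -/
noncomputable def lyapunovPhi (d : ℕ) (x : EuclideanSpace ℝ (Fin d)) : ℝ := 1 + ‖x‖ ^ 2

/-- The Hessian matrix `D²φ(x)` of `φ(x) = 1 + |x|²`, with entries the second partial
derivatives `∂²φ/∂xᵢ∂xⱼ (x)`. -/
noncomputable def lyapunovHessian (d : ℕ) (x : EuclideanSpace ℝ (Fin d)) :
    Matrix (Fin d) (Fin d) ℝ := fun i j =>
  fderiv ℝ (fun y => fderiv ℝ (lyapunovPhi d) y (EuclideanSpace.single j 1)) x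
    (EuclideanSpace.single i 1)

/-! Since `D²φ = 2 I` and `∇φ(x) = 2x`, the left-hand side equals
`2 s^γ Tr Q⁰ - 2 b₀ s^β (s - 1)` with `s = φ(x) ≥ 1`. As `β > 0` and `γ < β + 1`, the term
`-2 b₀ s^(β+1)` dominates every other power of `s`, so the left-hand side plus `b₀ s` is
nonpositive for large `s`, hence bounded above on `[1, ∞)` by continuity: the drift condition
holds with `c = b₀`. -/

open Filter Topology

section Calculus

variable {d : ℕ}

theorem hasFDerivAt_lyapunovPhi (x : EuclideanSpace ℝ (Fin d)) :
    HasFDerivAt (lyapunovPhi d) (2 • innerSL ℝ x) x :=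
  (hasStrictFDerivAt_norm_sq x).hasFDerivAt.const_add 1

theorem fderiv_lyapunovPhi_apply (x v : EuclideanSpace ℝ (Fin d)) :
    fderiv ℝ (lyapunovPhi d) x v = 2 * ⟪x, v⟫ := by
  simp [(hasFDerivAt_lyapunovPhi x).fderiv, two_mul]

theorem gradient_lyapunovPhi (x : EuclideanSpace ℝ (Fin d)) :
    gradient (lyapunovPhi d) x = (2 : ℝ) • x := by
  have hdual : InnerProductSpace.toDual ℝ _ ((2 : ℝ) • x) = 2 • innerSL ℝ x := by
    ext v
    simp [two_mul]
  refine HasGradientAt.gradient ?_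
  rw [hasGradientAt_iff_hasFDerivAt, hdual]
  exact hasFDerivAt_lyapunovPhi x

theorem lyapunovHessian_eq (x : EuclideanSpace ℝ (Fin d)) :
    lyapunovHessian d x = (2 : ℝ) • (1 : Matrix (Fin d) (Fin d) ℝ) := by
  ext i j
  have hpartial : (fun y => fderiv ℝ (lyapunovPhi d) y (EuclideanSpace.single j 1))
      = fun y => ((2 : ℝ) • innerSL ℝ (EuclideanSpace.single j (1 : ℝ))) y := by
    funext y
    simp [fderiv_lyapunovPhi_apply, real_inner_comm]
  rw [lyapunovHessian, hpartial, ContinuousLinearMap.fderiv]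
  simp [EuclideanSpace.inner_single_left, Matrix.one_apply, eq_comm]

theorem trace_smul_mul_lyapunovHessian_add_inner_gradient (Q : Matrix (Fin d) (Fin d) ℝ)
    (q r : ℝ) (x : EuclideanSpace ℝ (Fin d)) :
    ((q • Q) * lyapunovHessian d x).trace + ⟪(-r) • x, gradient (lyapunovPhi d) x⟫
      = 2 * q * Q.trace - 2 * r * ‖x‖ ^ 2 := by
  rw [lyapunovHessian_eq, gradient_lyapunovPhi, Matrix.mul_smul, Matrix.mul_one,
    smul_smul, Matrix.trace_smul, real_inner_smul_left, real_inner_smul_right,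
    real_inner_self_eq_norm_sq, smul_eq_mul]
  ring

end Calculus

theorem eventually_drift_nonpos {γ β b₀ : ℝ} (T c : ℝ) (hb : 0 < b₀) (hβ : 0 < β)
    (hγβ : γ < β + 1) :
    ∀ᶠ s in atTop, 2 * T * s ^ γ - 2 * b₀ * s ^ β * (s - 1) + c * s ≤ 0 := by
  have hlim : Tendsto (fun s : ℝ => 2 * T * s ^ (-(β + 1 - γ)) + 2 * b₀ * s ^ (-1 : ℝ)
      + c * s ^ (-β) - 2 * b₀) atTop (𝓝 (-(2 * b₀))) := by
    simpa using ((((tendsto_rpow_neg_atTop (sub_pos.2 hγβ)).const_mul (2 * T)).add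
      ((tendsto_rpow_neg_atTop one_pos).const_mul (2 * b₀))).add
      ((tendsto_rpow_neg_atTop hβ).const_mul c)).sub_const (2 * b₀)
  have hneg : -(2 * b₀) < 0 := by linarith
  filter_upwards [hlim.eventually (gt_mem_nhds hneg), eventually_gt_atTop 0] with s hs_lt hs
  have e1 : s ^ (β + 1) * s ^ (-(β + 1 - γ)) = s ^ γ := by
    rw [← Real.rpow_add hs]; ring_nf
  have e2 : s ^ (β + 1) * s ^ (-1 : ℝ) = s ^ β := by
    rw [← Real.rpow_add hs]; ring_nf
  have e3 : s ^ (β + 1) * s ^ (-β) = s := by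
    rw [← Real.rpow_add hs]; ring_nf; exact Real.rpow_one s
  have e4 : s ^ (β + 1) = s ^ β * s := Real.rpow_add_one hs.ne' β
  have hfactor : 2 * T * s ^ γ - 2 * b₀ * s ^ β * (s - 1) + c * s = s ^ (β + 1) *
      (2 * T * s ^ (-(β + 1 - γ)) + 2 * b₀ * s ^ (-1 : ℝ) + c * s ^ (-β) - 2 * b₀) := by
    linear_combination (-2 * T) * e1 - 2 * b₀ * e2 - c * e3 + 2 * b₀ * e4
  rw [hfactor]
  exact mul_nonpos_of_nonneg_of_nonpos (Real.rpow_nonneg hs.le _) hs_lt.le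

theorem ContinuousOn.exists_pos_forall_le_of_eventually_nonpos {u : ℝ → ℝ} {s₀ : ℝ}
    (hu : ContinuousOn u (Set.Ici s₀)) (hneg : ∀ᶠ s in atTop, u s ≤ 0) :
    ∃ a > 0, ∀ s ≥ s₀, u s ≤ a := by
  obtain ⟨S, hS⟩ := eventually_atTop.1 hneg
  obtain ⟨M, hM⟩ := (isCompact_Icc.bddAbove_image
    (hu.mono Set.Icc_subset_Ici_self) : BddAbove (u '' Set.Icc s₀ S))
  refine ⟨max M 1, by positivity, fun s hs => ?_⟩
  rcases le_total s S with hsS | hSs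
  · exact (hM ⟨s, ⟨hs, hsS⟩, rfl⟩).trans (le_max_left _ _)
  · linarith [hS s hSs, le_max_right M 1]

theorem exists_pos_drift_le {γ β b₀ : ℝ} (T : ℝ) (hb : 0 < b₀) (hβ : 0 < β)
    (hγβ : γ < β + 1) :
    ∃ a > 0, ∀ s ≥ (1 : ℝ), 2 * T * s ^ γ - 2 * b₀ * s ^ β * (s - 1) ≤ a - b₀ * s := by
  have hcont : ContinuousOn (fun s : ℝ => 2 * T * s ^ γ - 2 * b₀ * s ^ β * (s - 1) + b₀ * s)
      (Set.Ici 1) := by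
    have hne : ∀ s ∈ Set.Ici (1 : ℝ), s ≠ 0 := fun s hs => (zero_lt_one.trans_le hs).ne'
    fun_prop (disch := exact hne)
  obtain ⟨a, ha, hle⟩ := hcont.exists_pos_forall_le_of_eventually_nonpos
    (eventually_drift_nonpos T b₀ hb hβ hγβ)
  exact ⟨a, ha, fun s hs => by linarith [hle s hs]⟩

theorem lyapunov_condition_for_polynomial_coefficients_general
    (d : ℕ) (Q0 : Matrix (Fin d) (Fin d) ℝ)
    (γ b₀ β : ℝ)
    (hb : 0 < b₀) (hβ : max (γ - 1) 0 < β) :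
    (∀ x : EuclideanSpace ℝ (Fin d),
      (((1 + ‖x‖ ^ 2) ^ γ • Q0) * lyapunovHessian d x).trace
          + ⟪(-(b₀ * (1 + ‖x‖ ^ 2) ^ β)) • x, gradient (lyapunovPhi d) x⟫
        = 2 * lyapunovPhi d x * ((1 + ‖x‖ ^ 2) ^ (γ - 1) * Q0.trace
            - b₀ * ‖x‖ ^ 2 * (1 + ‖x‖ ^ 2) ^ (β - 1))) ∧
    ∃ a > (0 : ℝ), ∃ c > (0 : ℝ), ∀ x : EuclideanSpace ℝ (Fin d),
      (((1 + ‖x‖ ^ 2) ^ γ • Q0) * lyapunovHessian d x).trace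
          + ⟪(-(b₀ * (1 + ‖x‖ ^ 2) ^ β)) • x, gradient (lyapunovPhi d) x⟫
        ≤ a - c * lyapunovPhi d x := by
  simp only [trace_smul_mul_lyapunovHessian_add_inner_gradient, lyapunovPhi]
  obtain ⟨hγβ, hβ₀⟩ := max_lt_iff.1 hβ
  refine ⟨fun x => ?_, ?_⟩
  · have hs : (1 + ‖x‖ ^ 2 : ℝ) ≠ 0 := by positivity
    rw [Real.rpow_sub_one hs, Real.rpow_sub_one hs]
    field_simp
  · obtain ⟨a, ha, hle⟩ := exists_pos_drift_le Q0.trace hb hβ₀ (by linarith : γ < β + 1)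
    refine ⟨a, ha, b₀, hb, fun x => ?_⟩
    linarith [hle (1 + ‖x‖ ^ 2) (le_add_of_nonneg_right (by positivity))]

/-- For `Q(x) = (1+|x|²)^γ Q⁰` (`Q⁰` symmetric positive definite, `γ ≥ 0`),
`b(x) = -b₀ x (1+|x|²)^β` (`b₀ > 0`, `β > max(γ-1, 0)`) and `φ(x) = 1+|x|²`, one has
`Tr(Q(x) D²φ(x)) + ⟨b(x), ∇φ(x)⟩ = 2 φ(x) [(1+|x|²)^{γ-1} Tr Q⁰ - b₀ |x|² (1+|x|²)^{β-1}]`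
for every `x ∈ ℝ^d`, and there exist `a, c > 0` with
`Tr(Q(x) D²φ(x)) + ⟨b(x), ∇φ(x)⟩ ≤ a - c φ(x)` on `ℝ^d`. -/
theorem lyapunov_condition_for_polynomial_coefficients
    (d : ℕ) (hd : 1 ≤ d) (Q0 : Matrix (Fin d) (Fin d) ℝ)
    (hsym : Q0.IsSymm) (hpd : Q0.PosDef) (γ b₀ β : ℝ)
    (hγ : 0 ≤ γ) (hb : 0 < b₀) (hβ : max (γ - 1) 0 < β) :
    (∀ x : EuclideanSpace ℝ (Fin d),
      (((1 + ‖x‖ ^ 2) ^ γ • Q0) * lyapunovHessian d x).trace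
          + ⟪(-(b₀ * (1 + ‖x‖ ^ 2) ^ β)) • x, gradient (lyapunovPhi d) x⟫
        = 2 * lyapunovPhi d x * ((1 + ‖x‖ ^ 2) ^ (γ - 1) * Q0.trace
            - b₀ * ‖x‖ ^ 2 * (1 + ‖x‖ ^ 2) ^ (β - 1))) ∧
    ∃ a > (0 : ℝ), ∃ c > (0 : ℝ), ∀ x : EuclideanSpace ℝ (Fin d),
      (((1 + ‖x‖ ^ 2) ^ γ • Q0) * lyapunovHessian d x).trace
          + ⟪(-(b₀ * (1 + ‖x‖ ^ 2) ^ β)) • x, gradient (lyapunovPhi d) x⟫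
        ≤ a - c * lyapunovPhi d x :=
  lyapunov_condition_for_polynomial_coefficients_general d Q0 γ b₀ β hb hβ
end

section
/- Let n ≥ 1 and let M be an n×n complex matrix all of whose eigenvalues have strictly negative real part. Then there exist constants K > 0 and ε > 0 such that ‖exp(t M)‖ ≤ K e^{−ε t} for every t ≥ 0; in particular exp(t M) tends to the zero matrix as t → +∞. -/
/-!
On the generalized eigenspace of an eigenvalue `μ` the matrix `M - μ` is nilpotent, so there
`exp (t M) v = e^{tμ} ∑_{k<m} t^k / k! (M - μ)^k v`, which is `O(e^{-εt})` on `t ≥ 0` for every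
`ε < -Re μ` since `t^k` is dominated by `e^{δt}` for every `δ > 0`. Fix `ε > 0` below `-Re μ`
for the finitely many eigenvalues. The vectors `v` with `exp (t M) v = O(e^{-εt})` form a
subspace containing every generalized eigenspace; as these span `ℂⁿ`, it is everything, and
applied to the standard basis this bounds every column of `exp (t M)`.
-/

open Matrix Filter

attribute [local instance] Matrix.normedAddCommGroup

open NormedSpace Asymptotics Set
open scoped Nat Topology

theorem Set.Finite.exists_pos_forall_lt {α : Type*} {s : Set α} (hs : s.Finite) {f : α → ℝ}
    (hf : ∀ x ∈ s, 0 < f x) : ∃ ε > 0, ∀ x ∈ s, ε < f x := by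
  have hsmall : ∀ᶠ ε in 𝓝[>] (0 : ℝ), ∀ x ∈ s, ε < f x :=
    (eventually_all_finite hs).2 fun x hx => nhdsWithin_le_nhds (eventually_lt_nhds (hf x hx))
  exact (hsmall.and self_mem_nhdsWithin).exists.imp fun ε h => ⟨h.2, h.1⟩

theorem isBigO_ofReal_pow_div_factorial_exp_mul {δ : ℝ} (hδ : 0 < δ) (k : ℕ) :
    (fun t : ℝ => (t : ℂ) ^ k / k !) =O[𝓟 (Ici 0)] fun t => Real.exp (δ * t) := by
  refine isBigO_principal.2 ⟨δ⁻¹ ^ k, fun t (ht : 0 ≤ t) => ?_⟩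
  have hexp := Real.pow_div_factorial_le_exp (δ * t) (mul_nonneg hδ.le ht) k
  rw [norm_div, norm_pow, Complex.norm_real, Real.norm_of_nonneg ht, Complex.norm_natCast,
    Real.norm_of_nonneg (Real.exp_nonneg _)]
  calc t ^ k / k ! = δ⁻¹ ^ k * ((δ * t) ^ k / k !) := by
        rw [mul_pow, ← mul_div_assoc, ← mul_assoc, ← mul_pow, inv_mul_cancel₀ hδ.ne', one_pow,
          one_mul]
    _ ≤ δ⁻¹ ^ k * Real.exp (δ * t) := by gcongr

namespace Matrix

variable {ι 𝕂 : Type*} [Fintype ι] [DecidableEq ι]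

theorem isBigO_of_forall_isBigO_mulVec [NormedRing 𝕂] {α F : Type*} [SeminormedAddCommGroup F]
    {l : Filter α} {A : α → Matrix ι ι 𝕂} {g : α → F} (h : ∀ v, (fun a => A a *ᵥ v) =O[l] g) :
    A =O[l] g := by
  have hcols : (fun a => (A a)ᵀ) =O[l] g :=
    (isBigO_pi (E' := fun _ : ι => ι → 𝕂)).2 fun j =>
      (h (Pi.single j 1)).congr_left fun a => mulVec_single_one _ _
  exact IsBigO.of_norm_left (by simpa only [norm_transpose] using hcols.norm_left)

variable [RCLike 𝕂]

theorem exp_smul_one (c : 𝕂) : exp (c • (1 : Matrix ι ι 𝕂)) = exp c • 1 := by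
  rw [smul_one_eq_diagonal, exp_diagonal, smul_one_eq_diagonal]
  simp

theorem exp_add_smul_one (A : Matrix ι ι 𝕂) (c : 𝕂) :
    exp (A + c • (1 : Matrix ι ι 𝕂)) = exp c • exp A := by
  rw [exp_add_of_commute _ _ ((Commute.one_right A).smul_right c), exp_smul_one, mul_smul_comm,
    mul_one]

/-- Matrices carry no global normed ring structure; the `ℓ∞` operator norm supplies one inducing
the usual topology. -/
theorem hasSum_exp_series (A : Matrix ι ι 𝕂) :
    HasSum (fun k => (k !⁻¹ : 𝕂) • A ^ k) (exp A) :=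
  letI : NormedRing (Matrix ι ι 𝕂) := Matrix.linftyOpNormedRing
  letI : NormedAlgebra 𝕂 (Matrix ι ι 𝕂) := Matrix.linftyOpNormedAlgebra
  @exp_series_hasSum_exp' 𝕂 _ _ _ _ _ _ (FiniteDimensional.complete 𝕂 _) A

theorem exp_mulVec_of_pow_mulVec_eq_zero {A : Matrix ι ι 𝕂} {v : ι → 𝕂} {m : ℕ}
    (hv : A ^ m *ᵥ v = 0) :
    exp A *ᵥ v = ∑ k ∈ Finset.range m, (k !⁻¹ : 𝕂) • (A ^ k *ᵥ v) := by
  have hseries : HasSum (fun k => (k !⁻¹ : 𝕂) • (A ^ k *ᵥ v)) (exp A *ᵥ v) := by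
    simpa only [smul_mulVec, Function.comp_def, AddMonoidHom.mk'_apply] using
      (hasSum_exp_series A).map (AddMonoidHom.mk' (· *ᵥ v) fun A B => add_mulVec A B v)
        (continuous_id.matrix_mulVec continuous_const)
  refine hseries.unique (hasSum_sum_of_ne_finset_zero fun k hk => ?_)
  obtain ⟨j, rfl⟩ := Nat.exists_eq_add_of_le (not_lt.mp (Finset.mem_range.not.mp hk))
  rw [add_comm, pow_add, ← mulVec_mulVec, hv, mulVec_zero, smul_zero]

theorem exp_smul_mulVec_of_pow_mulVec_eq_zero {M : Matrix ι ι ℂ} {μ : ℂ} {v : ι → ℂ} {m : ℕ}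
    (hv : (M - μ • 1) ^ m *ᵥ v = 0) (z : ℂ) :
    exp (z • M) *ᵥ v =
      Complex.exp (z * μ) • ∑ k ∈ Finset.range m, (z ^ k / k !) • ((M - μ • 1) ^ k *ᵥ v) := by
  have hsplit : z • M = z • (M - μ • 1) + (z * μ) • (1 : Matrix ι ι ℂ) := by
    rw [smul_sub, smul_smul, sub_add_cancel]
  have hvz : (z • (M - μ • 1)) ^ m *ᵥ v = 0 := by rw [smul_pow, smul_mulVec, hv, smul_zero]
  rw [hsplit, exp_add_smul_one, smul_mulVec, exp_mulVec_of_pow_mulVec_eq_zero hvz,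
    ← Complex.exp_eq_exp_ℂ]
  simp only [smul_pow, smul_mulVec, smul_smul, div_eq_inv_mul]

theorem isBigO_exp_smul_mulVec_of_pow_mulVec_eq_zero {M : Matrix ι ι ℂ} {μ : ℂ} {v : ι → ℂ}
    {m : ℕ} (hv : (M - μ • 1) ^ m *ᵥ v = 0) {ε : ℝ} (hε : ε < -μ.re) :
    (fun t : ℝ => exp (t • M) *ᵥ v) =O[𝓟 (Ici 0)] fun t => Real.exp (-ε * t) := by
  have hpoly : (fun t : ℝ => ∑ k ∈ Finset.range m, ((t : ℂ) ^ k / k !) • ((M - μ • 1) ^ k *ᵥ v))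
      =O[𝓟 (Ici 0)] fun t => Real.exp ((-μ.re - ε) * t) :=
    IsBigO.fun_sum fun k _ => by
      simpa only [smul_eq_mul, mul_one] using
        (isBigO_ofReal_pow_div_factorial_exp_mul (sub_pos.2 hε) k).smul
          (isBigO_const_const ((M - μ • 1) ^ k *ᵥ v) (one_ne_zero (α := ℝ)) _ :)
  have hphase : (fun t : ℝ => Complex.exp (t * μ)) =O[𝓟 (Ici 0)] fun t => Real.exp (μ.re * t) :=
    isBigO_of_le _ fun t => by simp [Complex.norm_exp, mul_comm]
  refine ((hphase.smul hpoly).congr (fun t => ?_) fun t => ?_)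
  · rw [← exp_smul_mulVec_of_pow_mulVec_eq_zero hv, Complex.coe_smul]
  · rw [smul_eq_mul, ← Real.exp_add]
    ring_nf

theorem isBigO_exp_smul_mulVec {M : Matrix ι ι ℂ} {ε : ℝ}
    (hε : ∀ μ ∈ spectrum ℂ M, ε < -μ.re) (v : ι → ℂ) :
    (fun t : ℝ => exp (t • M) *ᵥ v) =O[𝓟 (Ici 0)] fun t => Real.exp (-ε * t) := by
  let decaying : Submodule ℂ (ι → ℂ) :=
    { carrier := {v | (fun t : ℝ => exp (t • M) *ᵥ v) =O[𝓟 (Ici 0)] fun t => Real.exp (-ε * t)}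
      add_mem' := fun hv hw => (hv.add hw).congr_left fun t => (mulVec_add _ _ _).symm
      zero_mem' := (isBigO_zero _ _).congr_left fun t => (mulVec_zero _).symm
      smul_mem' := fun c v hv =>
        (hv.const_smul_left c).congr_left fun t => (mulVec_smul _ c v).symm }
  suffices ⊤ ≤ decaying from this trivial
  rw [← Module.End.iSup_maxGenEigenspace_eq_top (toLinAlgEquiv' M)]
  refine iSup_le fun μ v hv => ?_
  obtain ⟨m, hm⟩ := (Module.End.mem_maxGenEigenspace _ _ _).1 hv
  rcases eq_or_ne v 0 with rfl | hv0
  · exact decaying.zero_mem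
  have hμ : μ ∈ spectrum ℂ M := by
    rw [← AlgEquiv.spectrum_eq toLinAlgEquiv' M, ← Module.End.hasEigenvalue_iff_mem_spectrum]
    exact Module.End.hasEigenvalue_of_hasGenEigenvalue (k := m)
      ((Submodule.ne_bot_iff _).2 ⟨v, Module.End.mem_genEigenspace_nat.2 hm, hv0⟩)
  rw [← map_one toLinAlgEquiv', ← map_smul, ← map_sub, ← map_pow, toLinAlgEquiv'_apply] at hm
  exact isBigO_exp_smul_mulVec_of_pow_mulVec_eq_zero hm (hε μ hμ)

end Matrix

theorem matrix_exp_decay_of_spectrum_re_neg_general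
    (n : ℕ) (M : Matrix (Fin n) (Fin n) ℂ)
    (hspec : ∀ lam ∈ spectrum ℂ M, lam.re < 0) :
    (∃ K > (0 : ℝ), ∃ ε > (0 : ℝ), ∀ t : ℝ, 0 ≤ t →
      ‖NormedSpace.exp (t • M)‖ ≤ K * Real.exp (-ε * t)) ∧
    Tendsto (fun t : ℝ => NormedSpace.exp (t • M)) atTop (nhds 0) := by
  obtain ⟨ε, hε, hεM⟩ :=
    M.finite_spectrum.exists_pos_forall_lt fun μ hμ => neg_pos.2 (hspec μ hμ)
  have hdecay : (fun t : ℝ => exp (t • M)) =O[𝓟 (Ici 0)] fun t => Real.exp (-ε * t) :=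
    isBigO_of_forall_isBigO_mulVec (isBigO_exp_smul_mulVec hεM)
  obtain ⟨K, hK, hKbound⟩ := hdecay.exists_pos
  refine ⟨⟨K, hK, ε, hε, fun t ht => ?_⟩, ?_⟩
  · simpa only [Real.norm_of_nonneg (Real.exp_nonneg _)] using isBigOWith_principal.1 hKbound t ht
  · refine (hdecay.mono (le_principal_iff.2 (Ici_mem_atTop 0))).trans_tendsto ?_
    exact Real.tendsto_exp_atBot.comp (tendsto_id.const_mul_atTop_of_neg (neg_lt_zero.2 hε))

/-- If all the eigenvalues of an `n × n` complex matrix `M` (`n ≥ 1`) have strictly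
negative real part, then there exist `K > 0` and `ε > 0` such that
`‖exp(t M)‖ ≤ K e^{-ε t}` for every `t ≥ 0`; in particular `exp(t M) → 0` as `t → +∞`. -/
theorem matrix_exp_decay_of_spectrum_re_neg
    (n : ℕ) (hn : 1 ≤ n) (M : Matrix (Fin n) (Fin n) ℂ)
    (hspec : ∀ lam ∈ spectrum ℂ M, lam.re < 0) :
    (∃ K > (0 : ℝ), ∃ ε > (0 : ℝ), ∀ t : ℝ, 0 ≤ t →
      ‖NormedSpace.exp (t • M)‖ ≤ K * Real.exp (-ε * t)) ∧
    Tendsto (fun t : ℝ => NormedSpace.exp (t • M)) atTop (nhds 0) :=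
  matrix_exp_decay_of_spectrum_re_neg_general n M hspec
end

section
/- Let m ≥ 1 and let C be a real m×m matrix such that every complex eigenvalue λ of C satisfies either Re λ < 0 or λ = 0. Let η ∈ ℝ^m be such that sup_{t ≥ 0} |exp(t C) η| < +∞. Then exp(t C) η converges to a limit in ℝ^m as t → +∞. -/
/-!
Over `ℂ`, write `η` as a sum of generalized eigenvectors of `C`. On a generalized eigenvector
for `μ`, `exp (t C)` acts as `e^{tμ}` times a polynomial in `t`, so these components tend to `0`
when `Re μ < 0`. The component for `μ = 0` is then a polynomial in `t` that stays bounded as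
`t → ∞`, hence constant, and `exp (t C) η` converges to that constant.
-/

open Matrix Filter Finset
open scoped Nat Topology

section PolynomialGrowth

variable {E : Type*} [NormedAddCommGroup E] [NormedSpace ℝ E]

theorem tendsto_inv_pow_smul_sum_range_pow_smul (c : ℕ → E) (n : ℕ) :
    Tendsto (fun t : ℝ => (t ^ n)⁻¹ • ∑ j ∈ range (n + 1), t ^ j • c j) atTop (𝓝 (c n)) := by
  have hlow : ∀ j ∈ range n, Tendsto (fun t : ℝ => ((t ^ n)⁻¹ * t ^ j) • c j) atTop (𝓝 0) := by
    intro j hj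
    have hjn : j < n := mem_range.mp hj
    have : Tendsto (fun t : ℝ => (t ^ (n - j))⁻¹) atTop (𝓝 0) :=
      (tendsto_pow_atTop (by omega)).inv_tendsto_atTop
    refine (this.smul_const (c j)).congr' ?_ |>.trans (by rw [zero_smul])
    filter_upwards [eventually_ne_atTop 0] with t ht
    rw [← pow_sub_mul_pow t hjn.le, mul_inv, inv_mul_cancel_right₀ (pow_ne_zero _ ht)]
  have := (tendsto_finsetSum _ hlow).add (tendsto_const_nhds (x := c n))
  rw [sum_const_zero, zero_add] at this
  refine this.congr' ?_
  filter_upwards [eventually_ne_atTop 0] with t ht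
  simp only [sum_range_succ, smul_add, smul_sum, smul_smul,
    inv_mul_cancel₀ (pow_ne_zero n ht), one_smul]

theorem eq_zero_of_norm_sum_range_pow_smul_le {c : ℕ → E} {n : ℕ} (hn : n ≠ 0) {B : ℝ}
    (hB : ∀ᶠ t : ℝ in atTop, ‖∑ j ∈ range (n + 1), t ^ j • c j‖ ≤ B) : c n = 0 := by
  refine tendsto_nhds_unique (tendsto_inv_pow_smul_sum_range_pow_smul c n) ?_
  have hinv : Tendsto (fun t : ℝ => B * (t ^ n)⁻¹) atTop (𝓝 0) := by
    simpa using ((tendsto_pow_atTop hn).inv_tendsto_atTop).const_mul B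
  refine squeeze_zero_norm' ?_ hinv
  filter_upwards [hB, eventually_gt_atTop 0] with t htB ht
  rw [norm_smul, norm_inv, norm_pow, Real.norm_of_nonneg ht.le, mul_comm]
  gcongr

/-- A polynomial bounded at `+∞` is constant; the right-hand side is its value at `0`. -/
theorem sum_range_pow_smul_eq_of_norm_le {c : ℕ → E} {n : ℕ} {B : ℝ}
    (hB : ∀ᶠ t : ℝ in atTop, ‖∑ j ∈ range n, t ^ j • c j‖ ≤ B) (t : ℝ) :
    ∑ j ∈ range n, t ^ j • c j = ∑ j ∈ range n, (0 : ℝ) ^ j • c j := by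
  induction n with
  | zero => simp
  | succ n ih =>
    rcases eq_or_ne n 0 with rfl | hn
    · simp
    have hc : c n = 0 := eq_zero_of_norm_sum_range_pow_smul_le hn hB
    simp only [sum_range_succ, hc, smul_zero, add_zero] at hB ⊢
    exact ih hB

end PolynomialGrowth

theorem Complex.tendsto_exp_mul_mul_pow_atTop {μ : ℂ} (hμ : μ.re < 0) (j : ℕ) :
    Tendsto (fun t : ℝ => Complex.exp (t * μ) * (t : ℂ) ^ j) atTop (𝓝 0) := by
  rw [tendsto_zero_iff_norm_tendsto_zero]
  refine (tendsto_rpow_mul_exp_neg_mul_atTop_nhds_zero j (-μ.re) (by linarith)).congr' ?_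
  filter_upwards [eventually_ge_atTop 0] with t ht
  simp [Complex.norm_exp, abs_of_nonneg ht, mul_comm]

section Exponential

variable {n 𝕂 : Type*} [Fintype n] [DecidableEq n] [RCLike 𝕂]

-- `NormedSpace.exp` only depends on the topology, so any submultiplicative norm will do.
attribute [local instance] Matrix.linftyOpNormedRing Matrix.linftyOpNormedAlgebra

theorem Matrix.exp_mulVec_of_pow_mulVec_eq_zero_s9 (N : Matrix n n 𝕂) {k : ℕ} {v : n → 𝕂}
    (hv : N ^ k *ᵥ v = 0) :
    NormedSpace.exp N *ᵥ v = ∑ j ∈ range k, (j !⁻¹ : 𝕂) • (N ^ j *ᵥ v) := by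
  have hseries := (NormedSpace.exp_series_hasSum_exp' (𝕂 := 𝕂) N).map
    (mulVec.addMonoidHomLeft v) (continuous_id.matrix_mulVec continuous_const)
  refine hseries.unique (hasSum_sum_of_ne_finset_zero fun j hj => ?_) |>.trans
    (sum_congr rfl fun j _ => smul_mulVec _ _ _)
  obtain ⟨i, rfl⟩ := Nat.exists_eq_add_of_le' (not_lt.mp (mt mem_range.mpr hj))
  change ((↑(i + k)! : 𝕂)⁻¹ • N ^ (i + k)) *ᵥ v = 0
  rw [pow_add, smul_mulVec, ← mulVec_mulVec, hv, mulVec_zero, smul_zero]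

theorem Matrix.exp_smul_mulVec_of_pow_sub_smul_mulVec_eq_zero (A : Matrix n n 𝕂) (μ t : 𝕂)
    {k : ℕ} {v : n → 𝕂} (hv : (A - μ • 1) ^ k *ᵥ v = 0) :
    NormedSpace.exp (t • A) *ᵥ v =
      NormedSpace.exp (t * μ) • ∑ j ∈ range k, (t ^ j / j !) • ((A - μ • 1) ^ j *ᵥ v) := by
  have hsplit : t • A = (t * μ) • 1 + t • (A - μ • 1) := by
    rw [smul_sub, smul_smul]; abel
  have hscalar : NormedSpace.exp ((t * μ) • 1 : Matrix n n 𝕂) = NormedSpace.exp (t * μ) • 1 := by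
    have := NormedSpace.algebraMap_exp_comm (𝔸 := Matrix n n 𝕂) (t * μ)
    rwa [Algebra.algebraMap_eq_smul_one, Algebra.algebraMap_eq_smul_one, eq_comm] at this
  have hnil : (t • (A - μ • 1)) ^ k *ᵥ v = 0 := by rw [smul_pow, smul_mulVec, hv, smul_zero]
  rw [hsplit, exp_add_of_commute _ _ ((Commute.one_left _).smul_left _), hscalar, smul_one_mul,
    smul_mulVec, exp_mulVec_of_pow_mulVec_eq_zero_s9 _ hnil]
  congr 1
  refine sum_congr rfl fun j _ => ?_
  rw [smul_pow, smul_mulVec, smul_smul, div_eq_inv_mul]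

theorem Matrix.exp_map_ofReal (M : Matrix n n ℝ) :
    (NormedSpace.exp M).map Complex.ofReal = NormedSpace.exp (M.map Complex.ofReal) :=
  NormedSpace.map_exp (Complex.ofRealHom.mapMatrix (m := n))
    (continuous_id.matrix_map Complex.continuous_ofReal) M

end Exponential

section Complex

variable {n : Type*} [Fintype n] [DecidableEq n]

theorem Matrix.tendsto_exp_smul_mulVec_of_re_neg (A : Matrix n n ℂ) {μ : ℂ} (hμ : μ.re < 0)
    {k : ℕ} {v : n → ℂ} (hv : (A - μ • 1) ^ k *ᵥ v = 0) :
    Tendsto (fun t : ℝ => NormedSpace.exp ((t : ℂ) • A) *ᵥ v) atTop (𝓝 0) := by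
  simp_rw [exp_smul_mulVec_of_pow_sub_smul_mulVec_eq_zero A μ _ hv, smul_sum, smul_smul,
    ← Complex.exp_eq_exp_ℂ, ← mul_div_assoc]
  rw [show (0 : n → ℂ) = ∑ j ∈ range k, (0 : ℂ) • ((A - μ • 1) ^ j *ᵥ v) by simp]
  refine tendsto_finsetSum _ fun j _ => ?_
  simpa using ((Complex.tendsto_exp_mul_mul_pow_atTop hμ j).div_const (j ! : ℂ)).smul_const
    ((A - μ • 1) ^ j *ᵥ v)

theorem Matrix.exists_genEigenvector_decomposition (A : Matrix n n ℂ)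
    (x : n → ℂ) :
    ∃ v : ℂ →₀ (n → ℂ), (∀ μ, (A - μ • 1) ^ Fintype.card n *ᵥ v μ = 0) ∧
      (∀ μ ∈ v.support, μ ∈ spectrum ℂ A) ∧ (v.sum fun _ y => y) = x := by
  set f : Module.End ℂ (n → ℂ) := Matrix.toLinAlgEquiv' A
  have hx : x ∈ ⨆ μ, f.maxGenEigenspace μ := by
    rw [Module.End.iSup_maxGenEigenspace_eq_top]; trivial
  obtain ⟨v, hv, rfl⟩ := (Submodule.mem_iSup_iff_exists_finsupp _ x).mp hx
  have hgen : ∀ μ, v μ ∈ f.genEigenspace μ (Fintype.card n) := fun μ => by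
    simpa [Module.End.maxGenEigenspace_eq_genEigenspace_finrank] using hv μ
  refine ⟨v, fun μ => ?_, fun μ hμ => ?_, rfl⟩
  · have := Module.End.mem_genEigenspace_nat.mp (hgen μ)
    rwa [LinearMap.mem_ker, show f - μ • 1 = Matrix.toLinAlgEquiv' (A - μ • 1) by simp [f],
      ← map_pow, Matrix.toLinAlgEquiv'_apply] at this
  · have hev : f.HasEigenvalue μ := Module.End.hasEigenvalue_of_hasGenEigenvalue
      ((Submodule.ne_bot_iff _).mpr ⟨v μ, hgen μ, Finsupp.mem_support_iff.mp hμ⟩)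
    simpa [f, AlgEquiv.spectrum_eq] using hev.mem_spectrum

theorem Matrix.exists_add_tendsto_exp_smul_mulVec_zero (A : Matrix n n ℂ)
    (hA : ∀ μ ∈ spectrum ℂ A, μ.re < 0 ∨ μ = 0) (x : n → ℂ) :
    ∃ x₀ x₁, x = x₀ + x₁ ∧ A ^ Fintype.card n *ᵥ x₀ = 0 ∧
      Tendsto (fun t : ℝ => NormedSpace.exp ((t : ℂ) • A) *ᵥ x₁) atTop (𝓝 0) := by
  obtain ⟨v, hv, hspec, rfl⟩ := exists_genEigenvector_decomposition A x
  refine ⟨v 0, (v.erase 0).sum fun _ y => y, (v.add_sum_erase' 0 _ fun _ => rfl).symm,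
    by simpa using hv 0, ?_⟩
  suffices ∀ μ ∈ (v.erase 0).support,
      Tendsto (fun t : ℝ => NormedSpace.exp ((t : ℂ) • A) *ᵥ v.erase 0 μ) atTop (𝓝 0) by
    simpa [Finsupp.sum, mulVec_sum] using tendsto_finsetSum _ this
  intro μ hμ
  rw [Finsupp.support_erase, Finset.mem_erase] at hμ
  have hre : μ.re < 0 := (hA μ (hspec μ hμ.2)).resolve_right hμ.1
  rw [Finsupp.erase_ne hμ.1]
  exact tendsto_exp_smul_mulVec_of_re_neg A hre (hv μ)

theorem Matrix.exists_tendsto_exp_smul_mulVec_of_norm_le (A : Matrix n n ℂ)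
    (hA : ∀ μ ∈ spectrum ℂ A, μ.re < 0 ∨ μ = 0) (x : n → ℂ) {B : ℝ}
    (hB : ∀ᶠ t : ℝ in atTop, ‖NormedSpace.exp ((t : ℂ) • A) *ᵥ x‖ ≤ B) :
    ∃ L, Tendsto (fun t : ℝ => NormedSpace.exp ((t : ℂ) • A) *ᵥ x) atTop (𝓝 L) := by
  obtain ⟨x₀, x₁, rfl, hx₀, hx₁⟩ := exists_add_tendsto_exp_smul_mulVec_zero A hA x
  set p : ℝ → n → ℂ := fun t =>
    ∑ j ∈ range (Fintype.card n), t ^ j • ((j ! : ℂ)⁻¹ • (A ^ j *ᵥ x₀))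
  have hp : ∀ t : ℝ, NormedSpace.exp ((t : ℂ) • A) *ᵥ x₀ = p t := fun t => by
    simpa [p, ← Complex.coe_smul, smul_smul, div_eq_mul_inv] using
      exp_smul_mulVec_of_pow_sub_smul_mulVec_eq_zero A 0 t (by simpa using hx₀)
  have hp_bdd : ∀ᶠ t : ℝ in atTop, ‖p t‖ ≤ B + 1 := by
    filter_upwards [hB, hx₁.norm.eventually (gt_mem_nhds (by simp : ‖(0 : n → ℂ)‖ < 1))]
      with t hBt h₁
    calc ‖p t‖ = ‖NormedSpace.exp ((t : ℂ) • A) *ᵥ (x₀ + x₁)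
          - NormedSpace.exp ((t : ℂ) • A) *ᵥ x₁‖ := by rw [mulVec_add, hp, add_sub_cancel_right]
      _ ≤ B + 1 := (norm_sub_le _ _).trans (add_le_add hBt (by simpa using h₁.le))
  refine ⟨p 0, ?_⟩
  have hp_const : ∀ t, p t = p 0 := sum_range_pow_smul_eq_of_norm_le hp_bdd
  simpa only [mulVec_add, hp, hp_const, add_zero] using tendsto_const_nhds (x := p 0) |>.add hx₁

end Complex

theorem Complex.norm_ofReal_comp_le_sqrt_sum_sq {ι : Type*} [Fintype ι] (w : ι → ℝ) :
    ‖Complex.ofReal ∘ w‖ ≤ √(∑ i, w i ^ 2) :=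
  (pi_norm_le_iff_of_nonneg (Real.sqrt_nonneg _)).mpr fun i => by
    simpa using Real.abs_le_sqrt (single_le_sum (fun j _ => sq_nonneg (w j)) (mem_univ i))

theorem matrix_exp_apply_converges_of_bounded_general
    (m : ℕ) (C : Matrix (Fin m) (Fin m) ℝ)
    (hspec : ∀ lam : ℂ, lam ∈ spectrum ℂ (C.map (Complex.ofReal)) →
      lam.re < 0 ∨ lam = 0)
    (η : Fin m → ℝ)
    (hbdd : ∃ B : ℝ, ∀ t : ℝ, 0 ≤ t →
      Real.sqrt (∑ i, ((NormedSpace.exp (t • C)).mulVec η i) ^ 2) ≤ B) :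
    ∃ L : Fin m → ℝ,
      Tendsto (fun t : ℝ => (NormedSpace.exp (t • C)).mulVec η) atTop (nhds L) := by
  obtain ⟨B, hB⟩ := hbdd
  have hcomplex : ∀ t : ℝ,
      NormedSpace.exp ((t : ℂ) • C.map Complex.ofReal) *ᵥ (Complex.ofReal ∘ η) =
        Complex.ofReal ∘ (NormedSpace.exp (t • C) *ᵥ η) := fun t => by
    have hsmul : (t : ℂ) • C.map Complex.ofReal = (t • C).map Complex.ofReal := by ext; simp
    ext i
    rw [hsmul, ← exp_map_ofReal]
    exact (RingHom.map_mulVec Complex.ofRealHom _ η i).symm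
  obtain ⟨L, hL⟩ := exists_tendsto_exp_smul_mulVec_of_norm_le _ hspec (Complex.ofReal ∘ η)
    (B := B) <| (eventually_ge_atTop 0).mono fun t ht => by
      rw [hcomplex]; exact (Complex.norm_ofReal_comp_le_sqrt_sum_sq _).trans (hB t ht)
  simp only [hcomplex] at hL
  exact ⟨fun i => (L i).re, tendsto_pi_nhds.mpr fun i =>
    (Complex.continuous_re.tendsto _).comp (tendsto_pi_nhds.mp hL i)⟩

/-- Let `C` be a real `m × m` matrix (`m ≥ 1`) whose complex eigenvalues `λ` all satisfy
`Re λ < 0` or `λ = 0`. If `η ∈ ℝ^m` is such that `sup_{t ≥ 0} |exp(t C) η| < ∞`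
(Euclidean norm), then `exp(t C) η` converges to a limit in `ℝ^m` as `t → +∞`. -/
theorem matrix_exp_apply_converges_of_bounded
    (m : ℕ) (hm : 1 ≤ m) (C : Matrix (Fin m) (Fin m) ℝ)
    (hspec : ∀ lam : ℂ, lam ∈ spectrum ℂ (C.map (Complex.ofReal)) →
      lam.re < 0 ∨ lam = 0)
    (η : Fin m → ℝ)
    (hbdd : ∃ B : ℝ, ∀ t : ℝ, 0 ≤ t →
      Real.sqrt (∑ i, ((NormedSpace.exp (t • C)).mulVec η i) ^ 2) ≤ B) :
    ∃ L : Fin m → ℝ,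
      Tendsto (fun t : ℝ => (NormedSpace.exp (t • C)).mulVec η) atTop (nhds L) :=
  matrix_exp_apply_converges_of_bounded_general m C hspec η hbdd
end

section
/- Let q(x) = (1+x²) e^{x⁴} and b(x) = −3x(1+x²) e^{x⁴} for x ∈ ℝ. There exists no function φ : ℝ → ℝ which is twice continuously differentiable, strictly positive, satisfies φ(x) → +∞ as |x| → +∞, and for which both of the following hold: (a) there exist constants a > 0 and c > 0 with q(x) φ''(x) + b(x) φ'(x) ≤ a − c φ(x) for every x ∈ ℝ; (b) there exists a constant c' > 0 with q(x) ≤ c' (1+x²) φ(x) for every x ∈ ℝ. -/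
/-! Since `b = -3x q` with `q ≥ 1`, the Lyapunov inequality gives `φ'' - 3x φ' ≤ a`, i.e.
`(e^{-3x²/2} φ')' ≤ a e^{-3x²/2} ≤ a`. Integrating twice on `[0, X]` bounds `φ(X)` by
`φ(0) + X e^{3X²/2} (|φ'(0)| + aX) = o(e^{X⁴})`, whereas the growth bound forces
`e^{X⁴} ≤ c' φ(X)`. -/

open Filter Asymptotics Real Set

theorem le_exp_mul_of_deriv_sub_mul_le {g g' : ℝ → ℝ} {k a t : ℝ} (hk : 0 ≤ k) (ha : 0 ≤ a)
    (hg : ∀ x, HasDerivAt g (g' x) x) (hbound : ∀ x, 0 ≤ x → g' x - k * x * g x ≤ a)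
    (ht : 0 ≤ t) : g t ≤ exp (k * t ^ 2 / 2) * (g 0 + a * t) := by
  set w : ℝ → ℝ := fun x => exp (-(k * x ^ 2 / 2))
  have hw : ∀ x, HasDerivAt (fun x => a * x - w x * g x) (a - w x * (g' x - k * x * g x)) x := by
    intro x
    have hexp : HasDerivAt w (w x * -(k * (2 * x) / 2)) x := by
      simpa using ((((hasDerivAt_pow 2 x).const_mul k).div_const 2).neg).exp
    exact (((hasDerivAt_id x).const_mul a).sub (hexp.mul (hg x))).congr_deriv (by ring)
  have hmono : MonotoneOn (fun x => a * x - w x * g x) (Ici 0) := by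
    refine monotoneOn_of_hasDerivWithinAt_nonneg (convex_Ici 0)
      (fun x _ => (hw x).continuousAt.continuousWithinAt) (fun x _ => (hw x).hasDerivWithinAt)
      fun x hx => sub_nonneg.2 ?_
    have hx : 0 ≤ x := (interior_subset hx : x ∈ Ici 0)
    have hw1 : w x ≤ 1 := exp_le_one_iff.2 (by nlinarith [mul_nonneg hk (sq_nonneg x)])
    rcases le_total 0 (g' x - k * x * g x) with hnonneg | hnonpos
    · exact (mul_le_of_le_one_left hnonneg hw1).trans (hbound x hx)
    · exact (mul_nonpos_of_nonneg_of_nonpos (exp_pos _).le hnonpos).trans ha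
  have hwt : w t * g t ≤ g 0 + a * t := by
    have h := hmono self_mem_Ici ht ht
    norm_num [w] at h
    linarith
  calc g t = exp (k * t ^ 2 / 2) * (w t * g t) := by
        rw [← mul_assoc, ← exp_add, add_neg_cancel, exp_zero, one_mul]
    _ ≤ exp (k * t ^ 2 / 2) * (g 0 + a * t) := by gcongr

theorem le_add_mul_exp_of_deriv_sub_mul_le {φ φ' φ'' : ℝ → ℝ} {k a X : ℝ} (hk : 0 ≤ k)
    (ha : 0 ≤ a) (hφ : ∀ x, HasDerivAt φ (φ' x) x) (hφ' : ∀ x, HasDerivAt φ' (φ'' x) x)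
    (hbound : ∀ x, 0 ≤ x → φ'' x - k * x * φ' x ≤ a) (hX : 0 ≤ X) :
    φ X ≤ φ 0 + X * (exp (k * X ^ 2 / 2) * (|φ' 0| + a * X)) := by
  have hderiv : ∀ t ∈ interior (Icc 0 X), deriv φ t ≤ exp (k * X ^ 2 / 2) * (|φ' 0| + a * X) := by
    intro t ht
    rw [interior_Icc] at ht
    rw [(hφ t).deriv]
    calc φ' t ≤ exp (k * t ^ 2 / 2) * (φ' 0 + a * t) :=
          le_exp_mul_of_deriv_sub_mul_le hk ha hφ' hbound ht.1.le
      _ ≤ exp (k * t ^ 2 / 2) * (|φ' 0| + a * X) := by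
          gcongr
          exacts [le_abs_self _, ht.2.le]
      _ ≤ exp (k * X ^ 2 / 2) * (|φ' 0| + a * X) := by
          gcongr
          exacts [ht.1.le, ht.2.le]
  have := (convex_Icc 0 X).image_sub_le_mul_sub_of_deriv_le
    (fun x _ => (hφ x).continuousAt.continuousWithinAt)
    (fun x _ => (hφ x).differentiableAt.differentiableWithinAt) hderiv
    0 (left_mem_Icc.2 hX) X (right_mem_Icc.2 hX) hX
  linarith

theorem tendsto_pow_four_sub_atTop :
    Tendsto (fun x : ℝ => x ^ 4 - (x + 3 * x ^ 2 / 2)) atTop atTop := by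
  refine tendsto_atTop_mono' atTop ?_ tendsto_id
  filter_upwards [eventually_ge_atTop 2] with x hx
  have : 4 * x ^ 2 ≤ x ^ 4 := by nlinarith [mul_nonneg (sq_nonneg x) (by nlinarith : 0 ≤ x ^ 2 - 4)]
  rw [id]
  nlinarith

theorem isLittleO_add_mul_exp_exp_pow_four (A B C : ℝ) :
    (fun x => A + x * (exp (3 * x ^ 2 / 2) * (B + C * x))) =o[atTop] fun x => exp (x ^ 4) := by
  have hconst : (fun _ : ℝ => A) =o[atTop] fun x => exp (x ^ 4) :=
    isLittleO_const_left.2 <| Or.inr <| by simp [Function.comp_def]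
  have hpoly : (fun x : ℝ => B * x + C * x ^ 2) =o[atTop] exp :=
    ((isLittleO_pow_exp_atTop (n := 1)).const_mul_left B).add
      ((isLittleO_pow_exp_atTop (n := 2)).const_mul_left C) |>.congr_left fun x => by ring
  have hexp : (fun x => exp x * exp (3 * x ^ 2 / 2)) =o[atTop] fun x => exp (x ^ 4) := by
    simpa only [← exp_add] using isLittleO_exp_comp_exp_comp.2 tendsto_pow_four_sub_atTop
  refine hconst.add (((hpoly.mul_isBigO (isBigO_refl (fun x => exp (3 * x ^ 2 / 2)) atTop)).trans
    hexp).congr_left fun x => by ring)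

/-- For `q(x) = (1+x²) e^{x⁴}` and `b(x) = -3x(1+x²) e^{x⁴}`, there is no `C²` function
`φ : ℝ → ℝ`, strictly positive and blowing up as `|x| → +∞`, such that both
`q φ'' + b φ' ≤ a - c φ` on `ℝ` for some `a, c > 0`, and `q(x) ≤ c' (1+x²) φ(x)` on `ℝ`
for some `c' > 0`. -/
theorem no_lyapunov_function_with_growth_bound :
    ¬ ∃ φ : ℝ → ℝ, ContDiff ℝ 2 φ ∧ (∀ x, 0 < φ x) ∧
      Tendsto φ (cocompact ℝ) atTop ∧
      (∃ a > (0 : ℝ), ∃ c > (0 : ℝ), ∀ x : ℝ,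
        (1 + x ^ 2) * Real.exp (x ^ 4) * iteratedDeriv 2 φ x
          + (-(3 * x * (1 + x ^ 2) * Real.exp (x ^ 4))) * deriv φ x ≤ a - c * φ x) ∧
      (∃ c' > (0 : ℝ), ∀ x : ℝ,
        (1 + x ^ 2) * Real.exp (x ^ 4) ≤ c' * (1 + x ^ 2) * φ x) := by
  rintro ⟨φ, hφ, hpos, -, ⟨a, ha, c, hc, hL⟩, c', hc', hgrow⟩
  have hφ' : ∀ x, HasDerivAt φ (deriv φ x) x :=
    fun x => (hφ.differentiable (by norm_num) x).hasDerivAt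
  have hφ'' : ∀ x, HasDerivAt (deriv φ) (iteratedDeriv 2 φ x) x := fun x => by
    simpa [iteratedDeriv_succ] using
      ((hφ.differentiable_iteratedDeriv 1 (by norm_num)) x).hasDerivAt
  have hbound : ∀ x, 0 ≤ x → iteratedDeriv 2 φ x - 3 * x * deriv φ x ≤ a := fun x _ => by
    refine le_of_mul_le_of_one_le (c := (1 + x ^ 2) * exp (x ^ 4)) ?_ ha.le ?_
    · linarith [hL x, mul_pos hc (hpos x)]
    · exact one_le_mul_of_one_le_of_one_le (le_add_of_nonneg_right (sq_nonneg x))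
        (one_le_exp (by positivity))
  have hbigO : (fun x => exp (x ^ 4)) =O[atTop]
      fun X => φ 0 + X * (exp (3 * X ^ 2 / 2) * (|deriv φ 0| + a * X)) := by
    refine IsBigO.of_bound c' ?_
    filter_upwards [eventually_ge_atTop 0] with X hX
    have hgrowX : exp (X ^ 4) ≤ c' * φ X := by
      have := hgrow X
      rw [mul_comm c', mul_assoc] at this
      exact le_of_mul_le_mul_left this (by positivity)
    rw [norm_of_nonneg (exp_pos _).le]
    calc exp (X ^ 4) ≤ c' * φ X := hgrowX
      _ ≤ _ := by
        gcongr
        exact (le_add_mul_exp_of_deriv_sub_mul_le zero_le_three ha.le hφ' hφ'' hbound hX).trans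
          (le_norm_self _)
  exact isLittleO_irrefl (.of_forall fun x => (exp_pos _).ne')
    (hbigO.trans_isLittleO (isLittleO_add_mul_exp_exp_pow_four _ _ _))
end

section
/- Let d ≥ 1, let Q⁰ be a constant symmetric positive definite d×d real matrix, let γ ≥ 0, b₀ > 0, β > max(γ − 1, 0) and σ > 0. Then there exist constants a > 0 and c > 0 such that for every x ∈ ℝ^d, (1+|x|²)^γ [ 2σ (1+|x|²)^{σ−1} Tr Q⁰ + 4σ(σ−1) (1+|x|²)^{σ−2} ⟨Q⁰ x, x⟩ ] − 2σ b₀ |x|² (1+|x|²)^{β+σ−1} ≤ a − c (1+|x|²)^σ. (This expresses that φ_σ(x) = (1+|x|²)^σ satisfies Tr(Q(x) D²φ_σ(x)) + ⟨b(x), ∇φ_σ(x)⟩ ≤ a − c φ_σ(x) for the coefficients Q(x) = (1+|x|²)^γ Q⁰ and b(x) = −b₀ x (1+|x|²)^β.) -/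
open Matrix Finset Filter

/-! Put `t = 1 + |x|²`. Bounding `⟨Q⁰x, x⟩` by a multiple of `|x|² ≤ t`, the diffusion part is
`O(t^(γ+σ-1))`, while `|x|² = t - 1` turns the drift part into `-2σb₀ t^(β+σ) + 2σb₀ t^(β+σ-1)`.
Since `β > γ - 1` and `β > 0`, the term `-2σb₀ t^(β+σ)` dominates `t^(γ+σ-1)`, `t^(β+σ-1)` and
`t^σ` for large `t`, so absorbing them costs only an additive constant. -/

theorem abs_mulVec_dotProduct_self_le {n : Type*} [Fintype n] (Q : Matrix n n ℝ) (x : n → ℝ) :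
    |Q *ᵥ x ⬝ᵥ x| ≤ (∑ i, ∑ j, |Q i j|) * ∑ i, x i ^ 2 := by
  set s := ∑ i, x i ^ 2
  have hs : 0 ≤ s := sum_nonneg fun k _ => sq_nonneg (x k)
  have hcoord : ∀ i, |x i| ≤ √s := fun i =>
    Real.abs_le_sqrt (single_le_sum (fun k _ => sq_nonneg (x k)) (mem_univ i))
  have hprod : ∀ i j, |x j * x i| ≤ s := fun i j => by
    rw [abs_mul, ← Real.mul_self_sqrt hs]
    exact mul_le_mul (hcoord j) (hcoord i) (abs_nonneg _) (Real.sqrt_nonneg _)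
  calc |Q *ᵥ x ⬝ᵥ x| = |∑ i, ∑ j, Q i j * (x j * x i)| := by
        simp only [dotProduct, mulVec, sum_mul, mul_assoc]
    _ ≤ ∑ i, ∑ j, |Q i j * (x j * x i)| :=
        (abs_sum_le_sum_abs _ _).trans (sum_le_sum fun i _ => abs_sum_le_sum_abs _ _)
    _ ≤ ∑ i, ∑ j, |Q i j| * s := by
        gcongr with i _ j _
        rw [abs_mul]
        exact mul_le_mul_of_nonneg_left (hprod i j) (abs_nonneg _)
    _ = (∑ i, ∑ j, |Q i j|) * s := by simp only [sum_mul]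

theorem exists_mul_rpow_le_add_mul_rpow (A : ℝ) {B p q : ℝ} (hB : 0 < B) (hpq : p < q) :
    ∃ C > 0, ∀ t : ℝ, 1 ≤ t → A * t ^ p ≤ C + B * t ^ q := by
  obtain ⟨T, hT⟩ := eventually_atTop.1
    ((tendsto_rpow_atTop (sub_pos.2 hpq)).eventually_ge_atTop (|A| / B))
  refine ⟨|A| * max 1 T ^ |p| + 1, by positivity, fun t ht => ?_⟩
  have ht0 : 0 < t := one_pos.trans_le ht
  have hBt : 0 ≤ B * t ^ q := by positivity
  calc A * t ^ p ≤ |A| * t ^ p := by gcongr; exact le_abs_self A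
    _ ≤ |A| * max 1 T ^ |p| + 1 + B * t ^ q := by
      rcases le_total t (max 1 T) with hle | hge
      · have : t ^ p ≤ max 1 T ^ |p| :=
          (Real.rpow_le_rpow_of_exponent_le ht (le_abs_self p)).trans
            (Real.rpow_le_rpow ht0.le hle (abs_nonneg p))
        nlinarith [abs_nonneg A]
      · have hAB : |A| ≤ B * t ^ (q - p) :=
          (div_le_iff₀' hB).1 (hT t ((le_max_right 1 T).trans hge))
        have : |A| * t ^ p ≤ B * t ^ q := by
          calc |A| * t ^ p ≤ B * t ^ (q - p) * t ^ p := by gcongr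
            _ = B * t ^ q := by rw [mul_assoc, ← Real.rpow_add ht0, sub_add_cancel]
        have : 0 ≤ |A| * max 1 T ^ |p| := by positivity
        linarith

theorem diffusion_term_le_mul_rpow {t : ℝ} (ht : 0 < t) (γ σ τ r M : ℝ) (hr : |r| ≤ M * t) :
    t ^ γ * (2 * σ * t ^ (σ - 1) * τ + 4 * σ * (σ - 1) * t ^ (σ - 2) * r)
      ≤ (|2 * σ * τ| + |4 * σ * (σ - 1)| * M) * t ^ (γ + σ - 1) := by
  have h₁ : t ^ γ * t ^ (σ - 1) = t ^ (γ + σ - 1) := by rw [← Real.rpow_add ht]; ring_nf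
  have h₂ : t ^ γ * t ^ (σ - 2) = t ^ (γ + σ - 1) / t := by
    rw [← Real.rpow_add ht, ← Real.rpow_sub_one ht.ne']; ring_nf
  have hrt : 4 * σ * (σ - 1) * (r / t) ≤ |4 * σ * (σ - 1)| * M := by
    refine (le_abs_self _).trans ?_
    rw [abs_mul, abs_div, abs_of_pos ht]
    gcongr
    exact (div_le_iff₀ ht).2 hr
  calc t ^ γ * (2 * σ * t ^ (σ - 1) * τ + 4 * σ * (σ - 1) * t ^ (σ - 2) * r)
      = 2 * σ * τ * (t ^ γ * t ^ (σ - 1)) + 4 * σ * (σ - 1) * r * (t ^ γ * t ^ (σ - 2)) := by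
        ring
    _ = (2 * σ * τ + 4 * σ * (σ - 1) * (r / t)) * t ^ (γ + σ - 1) := by rw [h₁, h₂]; ring
    _ ≤ (|2 * σ * τ| + |4 * σ * (σ - 1)| * M) * t ^ (γ + σ - 1) := by
        gcongr
        exact le_abs_self _

theorem lyapunov_condition_for_power_phi_general
    (d : ℕ) (Q0 : Matrix (Fin d) (Fin d) ℝ) (γ b₀ β σ : ℝ)
    (hb : 0 < b₀) (hβ : max (γ - 1) 0 < β) (hσ : 0 < σ) :
    ∃ a > (0 : ℝ), ∃ c > (0 : ℝ), ∀ x : Fin d → ℝ,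
      (1 + ∑ i, x i ^ 2) ^ γ *
          (2 * σ * (1 + ∑ i, x i ^ 2) ^ (σ - 1) * Q0.trace
            + 4 * σ * (σ - 1) * (1 + ∑ i, x i ^ 2) ^ (σ - 2) * (Q0.mulVec x ⬝ᵥ x))
        - 2 * σ * b₀ * (∑ i, x i ^ 2) * (1 + ∑ i, x i ^ 2) ^ (β + σ - 1)
      ≤ a - c * (1 + ∑ i, x i ^ 2) ^ σ := by
  have hσb : 0 < σ * b₀ := mul_pos hσ hb
  set M := ∑ i, ∑ j, |Q0 i j|
  set K := |2 * σ * Q0.trace| + |4 * σ * (σ - 1)| * M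
  obtain ⟨C₁, hC₁, h₁⟩ := exists_mul_rpow_le_add_mul_rpow K (half_pos hσb)
    (show γ + σ - 1 < β + σ by linarith [le_max_left (γ - 1) 0])
  obtain ⟨C₂, hC₂, h₂⟩ := exists_mul_rpow_le_add_mul_rpow (2 * σ * b₀) (half_pos hσb)
    (show β + σ - 1 < β + σ by linarith)
  obtain ⟨C₃, hC₃, h₃⟩ := exists_mul_rpow_le_add_mul_rpow (σ * b₀) hσb
    (show σ < β + σ by linarith [le_max_right (γ - 1) 0])
  refine ⟨C₁ + C₂ + C₃, by positivity, σ * b₀, hσb, fun x => ?_⟩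
  set s := ∑ i, x i ^ 2
  have ht : 1 ≤ 1 + s := le_add_of_nonneg_right (sum_nonneg fun i _ => sq_nonneg (x i))
  have ht0 : 0 < 1 + s := one_pos.trans_le ht
  have hdiffusion := diffusion_term_le_mul_rpow ht0 γ σ Q0.trace (Q0 *ᵥ x ⬝ᵥ x) M
    ((abs_mulVec_dotProduct_self_le Q0 x).trans (by gcongr; linarith))
  have hdrift : s * (1 + s) ^ (β + σ - 1) = (1 + s) ^ (β + σ) - (1 + s) ^ (β + σ - 1) := by
    rw [Real.rpow_sub_one ht0.ne']
    field_simp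
    ring
  rw [mul_assoc (2 * σ * b₀), hdrift]
  linarith [h₁ _ ht, h₂ _ ht, h₃ _ ht]

/-- For a symmetric positive definite `d × d` matrix `Q⁰`, `γ ≥ 0`, `b₀ > 0`,
`β > max(γ-1, 0)` and `σ > 0`, there exist `a, c > 0` such that for every `x ∈ ℝ^d`,
`(1+|x|²)^γ [2σ(1+|x|²)^{σ-1} Tr Q⁰ + 4σ(σ-1)(1+|x|²)^{σ-2} ⟨Q⁰x, x⟩]
  - 2σ b₀ |x|² (1+|x|²)^{β+σ-1} ≤ a - c (1+|x|²)^σ`,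
i.e. `φ_σ(x) = (1+|x|²)^σ` satisfies `Tr(Q D²φ_σ) + ⟨b, ∇φ_σ⟩ ≤ a - c φ_σ` for
`Q(x) = (1+|x|²)^γ Q⁰` and `b(x) = -b₀ x (1+|x|²)^β`. -/
theorem lyapunov_condition_for_power_phi
    (d : ℕ) (hd : 1 ≤ d) (Q0 : Matrix (Fin d) (Fin d) ℝ)
    (hsym : Q0.IsSymm) (hpd : Q0.PosDef) (γ b₀ β σ : ℝ)
    (hγ : 0 ≤ γ) (hb : 0 < b₀) (hβ : max (γ - 1) 0 < β) (hσ : 0 < σ) :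
    ∃ a > (0 : ℝ), ∃ c > (0 : ℝ), ∀ x : Fin d → ℝ,
      (1 + ∑ i, x i ^ 2) ^ γ *
          (2 * σ * (1 + ∑ i, x i ^ 2) ^ (σ - 1) * Q0.trace
            + 4 * σ * (σ - 1) * (1 + ∑ i, x i ^ 2) ^ (σ - 2) * (Q0.mulVec x ⬝ᵥ x))
        - 2 * σ * b₀ * (∑ i, x i ^ 2) * (1 + ∑ i, x i ^ 2) ^ (β + σ - 1)
      ≤ a - c * (1 + ∑ i, x i ^ 2) ^ σ :=
  lyapunov_condition_for_power_phi_general d Q0 γ b₀ β σ hb hβ hσ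
end
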